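/- Let p = (a_{i_1}, a_{i_2}, …, a_{i_{d+1}}) be any path in Γ_L and let m be an integer divisible by N(p) = lcm(n_{i_1},…,n_{i_{d+1}}). Then the weighted path p^m = e_{i_1,i_2}^m e_{i_2,i_3}^m ⋯ e_{i_d,i_{d+1}}^m belongs to the subgroup of G_Γ generated by {x_{m',i} : a_i ∈ V(Γ_L), 0 ≤ m' < N}. -/

import Mathlib

open scoped commutatorElement

/-- Relators of the right-angled Artin group: commutators of adjacent vertices. -/
def raagRels {V : Type} (Γ : SimpleGraph V) : Set (FreeGroup V) :=
  {g | ∃ i j : V, Γ.Adj i j ∧ g = ⁅FreeGroup.of i, FreeGroup.of j⁆}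

/-- The right-angled Artin group of a simple graph. -/
abbrev RAAG {V : Type} (Γ : SimpleGraph V) : Type := PresentedGroup (raagRels Γ)

/-- The canonical generator of the RAAG corresponding to a vertex. -/
def raagGen {V : Type} (Γ : SimpleGraph V) (i : V) : RAAG Γ := PresentedGroup.of i

/-- The coset representative `w_m = a_1^{m r_1} ⋯ a_ℓ^{m r_ℓ}`. -/
def wrep {s : ℕ} (Γ : SimpleGraph (Fin s)) (ℓ : ℕ) (r : Fin s → ℤ) (m : ℤ) : RAAG Γ :=
  (((List.finRange s).take ℓ).map (fun i => raagGen Γ i ^ (m * r i))).prod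

/-- The Reidemeister–Schreier generator `x_{m,i} = w_m a_i w_{m+n_i}^{-1}`. -/
def xgen {s : ℕ} (Γ : SimpleGraph (Fin s)) (φ : RAAG Γ →* ℤ) (ℓ : ℕ) (r : Fin s → ℤ)
    (m : ℤ) (i : Fin s) : RAAG Γ :=
  wrep Γ ℓ r m * raagGen Γ i * (wrep Γ ℓ r (m + φ (raagGen Γ i)))⁻¹

/-- The weighted edge `e_{j,k}^m = a_j^{m/n_j} a_k^{-m/n_k}` (for `m` divisible by
`lcm(n_j, n_k)`, integer division is exact). -/
def wedge {s : ℕ} (Γ : SimpleGraph (Fin s)) (φ : RAAG Γ →* ℤ) (m : ℤ) (j k : Fin s) :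
    RAAG Γ :=
  raagGen Γ j ^ (m / φ (raagGen Γ j)) * (raagGen Γ k ^ (m / φ (raagGen Γ k)))⁻¹

/-- The weighted path `p^m`: the product of the weighted edges `e^m` along the
consecutive pairs of vertices of `p`. -/
def weightedPath {s : ℕ} (Γ : SimpleGraph (Fin s)) (φ : RAAG Γ →* ℤ) (m : ℤ)
    (p : List (Fin s)) : RAAG Γ :=
  ((p.zip p.tail).map fun q => wedge Γ φ m q.1 q.2).prod

/-- `N(p)`, the least common multiple of the `n_i` over the vertices of the path `p`. -/
def pathLcm {s : ℕ} (Γ : SimpleGraph (Fin s)) (φ : RAAG Γ →* ℤ) (p : List (Fin s)) : ℕ :=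
  p.foldr (fun i acc => Nat.lcm (φ (raagGen Γ i)).toNat acc) 1

/-- `N`, the least common multiple of the `n_i` over the vertices of `Γ_L`
(the vertices with `n_i ≠ 0`). -/
def bigN {s : ℕ} (Γ : SimpleGraph (Fin s)) (φ : RAAG Γ →* ℤ) : ℕ :=
  (Finset.univ.filter fun i : Fin s => φ (raagGen Γ i) ≠ 0).lcm
    fun i => (φ (raagGen Γ i)).toNat

/-!
Proof idea: the products `x_{0,i} x_{n_i,i} ⋯ x_{(q-1)n_i,i}` telescope to
`a_i^q w_{q n_i}^{-1}`, which lies in the subgroup as long as `q n_i ≤ N`. For adjacent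
`a_j, a_k` and `L = lcm(n_j, n_k) ≤ N` the two words with `q n = L` share the tail
`w_L^{-1}`, so their quotient is the weighted edge `e_{j,k}^L`. Since `a_j` and `a_k`
commute, `e_{j,k}^{cL} = (e_{j,k}^L)^c`, and a weighted path is a product of weighted edges.
-/

theorem Int.dvd_natCast_of_toNat_dvd {a : ℤ} {b : ℕ} (ha : 0 ≤ a) (h : a.toNat ∣ b) :
    a ∣ b := by
  rw [← Int.toNat_of_nonneg ha]
  exact Int.natCast_dvd_natCast.mpr h

theorem raagGen_commute_of_adj {V : Type} {Γ : SimpleGraph V} {j k : V} (h : Γ.Adj j k) :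
    Commute (raagGen Γ j) (raagGen Γ k) := by
  rw [← commutatorElement_eq_one_iff_commute, raagGen, raagGen, PresentedGroup.of,
    PresentedGroup.of, ← map_commutatorElement]
  exact (QuotientGroup.eq_one_iff _).mpr (Subgroup.subset_normalClosure ⟨j, k, h, rfl⟩)

section

variable {s : ℕ} {Γ : SimpleGraph (Fin s)} (φ : RAAG Γ →* ℤ) (ℓ : ℕ) (r : Fin s → ℤ)

def xgenSubgroup : Subgroup (RAAG Γ) :=
  Subgroup.closure {g | ∃ (m' : ℤ) (i : Fin s),
    φ (raagGen Γ i) ≠ 0 ∧ 0 ≤ m' ∧ m' < (bigN Γ φ : ℤ) ∧ g = xgen Γ φ ℓ r m' i}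

@[simp]
theorem wrep_zero : wrep Γ ℓ r 0 = 1 := by
  simp [wrep]

theorem prod_range_xgen (i : Fin s) (m : ℤ) (q : ℕ) :
    ((List.range q).map fun t : ℕ => xgen Γ φ ℓ r (m + t * φ (raagGen Γ i)) i).prod
      = wrep Γ ℓ r m * raagGen Γ i ^ q * (wrep Γ ℓ r (m + q * φ (raagGen Γ i)))⁻¹ := by
  induction q with
  | zero => simp
  | succ q ih =>
    rw [List.prod_range_succ, ih, xgen, pow_succ]
    have hshift : m + q * φ (raagGen Γ i) + φ (raagGen Γ i)
        = m + ((q + 1 : ℕ) : ℤ) * φ (raagGen Γ i) := by push_cast; ring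
    rw [hshift]
    group

theorem wedge_mul_eq_zpow {j k : Fin s} (hadj : Γ.Adj j k) {L : ℤ}
    (hj : φ (raagGen Γ j) ∣ L) (hk : φ (raagGen Γ k) ∣ L) (c : ℤ) :
    wedge Γ φ (L * c) j k = wedge Γ φ L j k ^ c := by
  have hcomm := (raagGen_commute_of_adj hadj).zpow_zpow (L / φ (raagGen Γ j))
    (L / φ (raagGen Γ k))
  rw [wedge, wedge, Int.mul_ediv_assoc' c hj, Int.mul_ediv_assoc' c hk, hcomm.inv_right.mul_zpow,
    zpow_mul, zpow_mul, inv_zpow]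

theorem toNat_dvd_bigN {i : Fin s} (hi : φ (raagGen Γ i) ≠ 0) :
    (φ (raagGen Γ i)).toNat ∣ bigN Γ φ :=
  Finset.dvd_lcm (by simpa using hi)

theorem bigN_pos (hφ : ∀ i, 0 ≤ φ (raagGen Γ i)) : 0 < bigN Γ φ := by
  rw [Nat.pos_iff_ne_zero, Ne, bigN, Finset.lcm_eq_zero_iff]
  rintro ⟨i, hi, hzero⟩
  exact (Finset.mem_filter.mp hi).2 (le_antisymm (Int.toNat_eq_zero.mp hzero) (hφ i))

theorem weightedPath_cons_cons (m : ℤ) (j k : Fin s) (p : List (Fin s)) :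
    weightedPath Γ φ m (j :: k :: p) = wedge Γ φ m j k * weightedPath Γ φ m (k :: p) := by
  simp [weightedPath]

theorem pow_mul_inv_wrep_mem_xgenSubgroup {i : Fin s} (hi : 0 < φ (raagGen Γ i)) {d : ℤ}
    (hd : 0 ≤ d) (hdN : d * φ (raagGen Γ i) ≤ bigN Γ φ) :
    raagGen Γ i ^ d * (wrep Γ ℓ r (d * φ (raagGen Γ i)))⁻¹ ∈ xgenSubgroup φ ℓ r := by
  lift d to ℕ using hd
  have htele := prod_range_xgen φ ℓ r i 0 d
  simp only [zero_add, wrep_zero, one_mul] at htele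
  rw [zpow_natCast, ← htele]
  refine Subgroup.list_prod_mem _ fun x hx => ?_
  obtain ⟨t, ht, rfl⟩ := List.mem_map.mp hx
  have htd : (t : ℤ) + 1 ≤ d := by exact_mod_cast List.mem_range.mp ht
  exact Subgroup.subset_closure ⟨t * φ (raagGen Γ i), i, hi.ne', by positivity,
    by nlinarith, rfl⟩

theorem wedge_mem_xgenSubgroup {j k : Fin s} (hadj : Γ.Adj j k)
    (hj : 0 < φ (raagGen Γ j)) (hk : 0 < φ (raagGen Γ k)) {L : ℤ} (hL : 0 ≤ L)
    (hLN : L ≤ bigN Γ φ) (hjL : φ (raagGen Γ j) ∣ L) (hkL : φ (raagGen Γ k) ∣ L) {m : ℤ}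
    (hLm : L ∣ m) : wedge Γ φ m j k ∈ xgenSubgroup φ ℓ r := by
  obtain ⟨c, rfl⟩ := hLm
  rw [wedge_mul_eq_zpow φ hadj hjL hkL]
  refine zpow_mem ?_ c
  have hfactor : ∀ i, 0 < φ (raagGen Γ i) → φ (raagGen Γ i) ∣ L →
      raagGen Γ i ^ (L / φ (raagGen Γ i)) * (wrep Γ ℓ r L)⁻¹ ∈ xgenSubgroup φ ℓ r := by
    intro i hi hiL
    have h := pow_mul_inv_wrep_mem_xgenSubgroup φ ℓ r hi (Int.ediv_nonneg hL hi.le)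
      (by rwa [Int.ediv_mul_cancel hiL])
    rwa [Int.ediv_mul_cancel hiL] at h
  have hsplit : wedge Γ φ L j k
      = (raagGen Γ j ^ (L / φ (raagGen Γ j)) * (wrep Γ ℓ r L)⁻¹)
        * (raagGen Γ k ^ (L / φ (raagGen Γ k)) * (wrep Γ ℓ r L)⁻¹)⁻¹ := by
    rw [wedge]
    group
  rw [hsplit]
  exact mul_mem (hfactor j hj hjL) (inv_mem (hfactor k hk hkL))

theorem weightedPath_mem_xgenSubgroup (hφ : ∀ i, 0 ≤ φ (raagGen Γ i)) {p : List (Fin s)}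
    (hchain : p.IsChain Γ.Adj) (hpL : ∀ i ∈ p, φ (raagGen Γ i) ≠ 0) {m : ℤ}
    (hm : (pathLcm Γ φ p : ℤ) ∣ m) : weightedPath Γ φ m p ∈ xgenSubgroup φ ℓ r := by
  induction hchain with
  | nil => exact one_mem _
  | singleton => exact one_mem _
  | @cons_cons j k p hadj _ ih =>
    have hpos : ∀ i ∈ j :: k :: p, 0 < φ (raagGen Γ i) :=
      fun i hi => (hφ i).lt_of_ne' (hpL i hi)
    set L := Nat.lcm (φ (raagGen Γ j)).toNat (φ (raagGen Γ k)).toNat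
    have hLm : (L : ℤ) ∣ m := (Int.natCast_dvd_natCast.mpr (Nat.lcm_dvd (Nat.dvd_lcm_left _ _)
      ((Nat.dvd_lcm_left _ _).trans (Nat.dvd_lcm_right _ _)))).trans hm
    have hLN : (L : ℤ) ≤ bigN Γ φ := by
      exact_mod_cast Nat.le_of_dvd (bigN_pos φ hφ)
        (Nat.lcm_dvd (toNat_dvd_bigN φ (hpL j (by simp))) (toNat_dvd_bigN φ (hpL k (by simp))))
    have hedge := wedge_mem_xgenSubgroup φ ℓ r hadj (hpos j (by simp)) (hpos k (by simp))
      L.cast_nonneg hLN (Int.dvd_natCast_of_toNat_dvd (hφ j) (Nat.dvd_lcm_left _ _))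
      (Int.dvd_natCast_of_toNat_dvd (hφ k) (Nat.dvd_lcm_right _ _)) hLm
    have htail := ih (fun i hi => hpL i (by simp [hi]))
      ((Int.natCast_dvd_natCast.mpr (Nat.dvd_lcm_right _ _)).trans hm)
    rw [weightedPath_cons_cons]
    exact mul_mem hedge htail

end

theorem weighted_path_mem_general
    {s : ℕ} (Γ : SimpleGraph (Fin s)) (φ : RAAG Γ →* ℤ)
    (n : Fin s → ℤ) (hn : ∀ i, n i = φ (raagGen Γ i)) (hn0 : ∀ i, 0 ≤ n i)
    (ℓ : ℕ) (r : Fin s → ℤ)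
    (p : List (Fin s))
    (hchain : p.Chain' Γ.Adj) (hpL : ∀ i ∈ p, n i ≠ 0)
    (m : ℤ) (hm : (pathLcm Γ φ p : ℤ) ∣ m) :
    weightedPath Γ φ m p ∈ Subgroup.closure
      {g : RAAG Γ | ∃ (m' : ℤ) (i : Fin s),
        n i ≠ 0 ∧ 0 ≤ m' ∧ m' < (bigN Γ φ : ℤ) ∧ g = xgen Γ φ ℓ r m' i} := by
  obtain rfl : n = fun i => φ (raagGen Γ i) := funext hn
  exact weightedPath_mem_xgenSubgroup φ ℓ r hn0 hchain hpL hm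

/-- For any path `p` in `Γ_L` and any integer `m` divisible by
`N(p)`, the weighted path `p^m` lies in the subgroup of `G_Γ` generated by
`{x_{m',i} : a_i ∈ V(Γ_L), 0 ≤ m' < N}`. -/
theorem weighted_path_mem
    {s : ℕ} (Γ : SimpleGraph (Fin s)) (φ : RAAG Γ →* ℤ)
    (hsurj : Function.Surjective φ)
    (n : Fin s → ℤ) (hn : ∀ i, n i = φ (raagGen Γ i)) (hn0 : ∀ i, 0 ≤ n i)
    (ℓ : ℕ) (hℓ1 : 1 ≤ ℓ) (hℓs : ℓ ≤ s) (r : Fin s → ℤ)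
    (hr : ∀ i : Fin s, (i : ℕ) < ℓ → r i ≠ 0 ∧ n i ≠ 0)
    (hsum : (((List.finRange s).take ℓ).map (fun i => r i * n i)).sum = 1)
    (p : List (Fin s)) (hp : p ≠ [])
    (hchain : p.Chain' Γ.Adj) (hpL : ∀ i ∈ p, n i ≠ 0)
    (m : ℤ) (hm : (pathLcm Γ φ p : ℤ) ∣ m) :
    weightedPath Γ φ m p ∈ Subgroup.closure
      {g : RAAG Γ | ∃ (m' : ℤ) (i : Fin s),
        n i ≠ 0 ∧ 0 ≤ m' ∧ m' < (bigN Γ φ : ℤ) ∧ g = xgen Γ φ ℓ r m' i} :=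
  weighted_path_mem_general Γ φ n hn hn0 ℓ r p hchain hpL m hm
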